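/- Let (K, v) be a rank one valued field and let E = {s_n}, F = {t_n} be two equivalent pseudo-convergent sequences in K (same breadth δ, and for every k there exist i_0, j_0 such that v(s_i − t_j) > v(t_{k+1} − t_k) for all i ≥ i_0, j ≥ j_0). If E is of algebraic type and β ∈ \overline{K} is a pseudo-limit of E with respect to an extension u of v, then β is also a pseudo-limit of F; in particular F is of algebraic type and L_E^u = L_F^u. -/

import Mathlib

/-!
A pseudo-limit `x` of a pseudo-convergent sequence `S` satisfies `u (x - S n) = u (S (n+1) - S n)`,
so being a pseudo-limit just says that `u (x - S j)` eventually exceeds every gap of `S`.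
Equal breadths make the gaps of two equivalent sequences mutually cofinal, and equivalence makes
`u (S i - T j)` eventually exceed the gaps of `T`; the ultrametric inequality then moves the
property "eventually exceeds every gap" from one sequence to the other.

For the algebraic type, take `g` the minimal polynomial of `β` and factor it over `L`: then
`v (g (t n)) = ∑ u (t n - r)` over the roots `r`. Each summand is eventually either constant
(when `r` is closer to `β` than `t n`) or equal to `u (β - t n)`, and the summand `r = β` is
strictly increasing.
-/

open Filter Polynomial

theorem StrictMono.exists_lt_of_ciSup_eq {α : Type*} [ConditionallyCompleteLinearOrder α]
    {f g : ℕ → α} (hf : StrictMono f) (hbdd : BddAbove (Set.range f))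
    (h : ⨆ n, f n = ⨆ n, g n) (k : ℕ) : ∃ i, f k < g i :=
  exists_lt_of_lt_ciSup (h ▸ (hf k.lt_succ_self).trans_le (le_ciSup hbdd _))

section PseudoConvergence

variable {R Γ₀ : Type*} [Ring R] [LinearOrderedAddCommMonoidWithTop Γ₀] (u : AddValuation R Γ₀)

def IsPseudoConvergent (S : ℕ → R) : Prop :=
  ∀ n, u (S (n + 1) - S n) < u (S (n + 2) - S (n + 1))

def IsPseudoLimit (S : ℕ → R) (x : R) : Prop :=
  ∀ n, u (x - S n) < u (x - S (n + 1))

variable {u} {S T : ℕ → R} {x : R}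

theorem IsPseudoConvergent.strictMono (hS : IsPseudoConvergent u S) :
    StrictMono fun n => u (S (n + 1) - S n) :=
  strictMono_nat_of_lt_succ hS

theorem IsPseudoConvergent.valuation_sub_of_lt (hS : IsPseudoConvergent u S) {n m : ℕ}
    (h : n < m) : u (S m - S n) = u (S (n + 1) - S n) := by
  induction m, h using Nat.le_induction with
  | base => rfl
  | succ m hnm ih =>
    have hlt : u (S m - S n) < u (S (m + 1) - S m) := ih ▸ hS.strictMono hnm
    rw [show S (m + 1) - S n = (S (m + 1) - S m) + (S m - S n) by abel,
      u.map_add_eq_of_lt_right hlt, ih]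

theorem IsPseudoLimit.strictMono (hx : IsPseudoLimit u S x) : StrictMono fun n => u (x - S n) :=
  strictMono_nat_of_lt_succ hx

theorem IsPseudoLimit.valuation_sub (hx : IsPseudoLimit u S x) (n : ℕ) :
    u (x - S n) = u (S (n + 1) - S n) := by
  rw [show S (n + 1) - S n = (x - S n) - (x - S (n + 1)) by abel,
    u.map_sub_eq_of_lt_left (hx n)]

theorem IsPseudoLimit.eventually_gap_lt (hx : IsPseudoLimit u S x) (k : ℕ) :
    ∀ᶠ j in atTop, u (S (k + 1) - S k) < u (x - S j) := by
  filter_upwards [eventually_gt_atTop k] with j hj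
  exact hx.valuation_sub k ▸ hx.strictMono hj

theorem IsPseudoConvergent.isPseudoLimit_of_eventually_gap_lt (hS : IsPseudoConvergent u S)
    (h : ∀ k, ∀ᶠ j in atTop, u (S (k + 1) - S k) < u (x - S j)) : IsPseudoLimit u S x := by
  have hgap : ∀ k, u (x - S k) = u (S (k + 1) - S k) := fun k => by
    obtain ⟨j, hkj, hj⟩ := ((eventually_gt_atTop k).and (h k)).exists
    rw [show x - S k = (S j - S k) + (x - S j) by abel,
      u.map_add_eq_of_lt_left (hS.valuation_sub_of_lt hkj ▸ hj), hS.valuation_sub_of_lt hkj]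
  intro n
  rw [hgap, hgap]
  exact hS n

/-- `hclose` is the equivalence of `S` and `T`; `hST` and `hTS` say that their gaps are
mutually cofinal, which is what equal breadths amount to. -/
theorem isPseudoLimit_iff_of_equivalent (hS : IsPseudoConvergent u S)
    (hT : IsPseudoConvergent u T)
    (hST : ∀ k, ∃ i, u (T (k + 1) - T k) < u (S (i + 1) - S i))
    (hTS : ∀ i, ∃ k, u (S (i + 1) - S i) < u (T (k + 1) - T k))
    (hclose : ∀ k, ∀ᶠ i in atTop, ∀ᶠ j in atTop, u (T (k + 1) - T k) < u (S i - T j)) :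
    IsPseudoLimit u S x ↔ IsPseudoLimit u T x := by
  constructor
  · refine fun hx => hT.isPseudoLimit_of_eventually_gap_lt fun k => ?_
    obtain ⟨i, hi⟩ := hST k
    have hxS : ∀ᶠ i' in atTop, u (T (k + 1) - T k) < u (x - S i') :=
      (hx.eventually_gap_lt i).mono fun _ => hi.trans
    obtain ⟨i', hxi', hi'⟩ := (hxS.and (hclose k)).exists
    refine hi'.mono fun j hj => ?_
    calc u (T (k + 1) - T k) < min (u (x - S i')) (u (S i' - T j)) := lt_min hxi' hj
      _ ≤ u (x - T j) := by simpa using u.map_add (x - S i') (S i' - T j)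
  · refine fun hx => hS.isPseudoLimit_of_eventually_gap_lt fun i => ?_
    obtain ⟨k, hk⟩ := hTS i
    refine (hclose k).mono fun i' hi' => ?_
    obtain ⟨j, hxj, hj⟩ := ((hx.eventually_gap_lt k).and hi').exists
    calc u (S (i + 1) - S i) < min (u (x - T j)) (u (S i' - T j)) :=
          lt_min (hk.trans hxj) (hk.trans hj)
      _ ≤ u (x - S i') := by simpa using u.map_sub (x - T j) (S i' - T j)

theorem IsPseudoLimit.eventually_valuation_sub_mono (hx : IsPseudoLimit u S x) (r : R) :
    ∀ᶠ n in atTop, u (S n - r) ≠ ⊤ ∧ u (S n - r) ≤ u (S (n + 1) - r) := by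
  have hsub : ∀ n, S n - r = (x - r) - (x - S n) := fun n => by abel
  by_cases hr : ∃ m, u (x - r) < u (x - S m)
  · obtain ⟨m, hm⟩ := hr
    have hconst : ∀ n ≥ m, u (S n - r) = u (x - r) := fun n hn => by
      rw [hsub, u.map_sub_eq_of_lt_left (hm.trans_le (hx.strictMono.monotone hn))]
    filter_upwards [eventually_ge_atTop m] with n hn
    rw [hconst n hn, hconst (n + 1) (by omega)]
    exact ⟨ne_top_of_lt hm, le_rfl⟩
  · push Not at hr
    have hfollow : ∀ n, u (S n - r) = u (x - S n) := fun n => by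
      rw [hsub, u.map_sub_eq_of_lt_right ((hx n).trans_le (hr (n + 1)))]
    refine Eventually.of_forall fun n => ?_
    rw [hfollow, hfollow]
    exact ⟨ne_top_of_lt (hx n), (hx n).le⟩

end PseudoConvergence

section SumsWithTop

variable {ι Γ₀ : Type*} [LinearOrderedAddCommMonoidWithTop Γ₀]

theorem Multiset.sum_map_ne_top {s : Multiset ι} {f : ι → Γ₀} (h0 : (0 : Γ₀) ≠ ⊤)
    (h : ∀ i ∈ s, f i ≠ ⊤) : (s.map f).sum ≠ ⊤ := by
  induction s using Multiset.induction with
  | empty => simpa using h0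
  | cons a s ih =>
    have ha := h a (Multiset.mem_cons_self a s)
    have hs := ih fun i hi => h i (Multiset.mem_cons_of_mem hi)
    rw [Multiset.map_cons, Multiset.sum_cons]
    exact fun htop => hs ((add_right_inj_of_ne_top ha).1 (htop.trans (add_top _).symm))

theorem Multiset.sum_map_lt_sum_map_of_ne_top {s : Multiset ι} {f g : ι → Γ₀}
    (hle : ∀ i ∈ s, f i ≤ g i) (htop : ∀ i ∈ s, f i ≠ ⊤) {i : ι} (hi : i ∈ s) (hlt : f i < g i) :
    (s.map f).sum < (s.map g).sum := by
  obtain ⟨s, rfl⟩ := Multiset.exists_cons_of_mem hi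
  simp only [Multiset.map_cons, Multiset.sum_cons]
  have h0 : (0 : Γ₀) ≠ ⊤ := fun h0 => htop i hi (by rw [← add_zero (f i), h0, add_top])
  have hrest : (s.map f).sum ≠ ⊤ :=
    Multiset.sum_map_ne_top h0 fun j hj => htop j (Multiset.mem_cons_of_mem hj)
  calc f i + (s.map f).sum < g i + (s.map f).sum := (add_lt_add_iff_left_of_ne_top hrest).2 hlt
    _ ≤ g i + (s.map g).sum := by
      gcongr
      exact Multiset.sum_map_le_sum_map _ _ fun j hj => hle j (Multiset.mem_cons_of_mem hj)

end SumsWithTop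

section Polynomials

variable {R Γ₀ : Type*} [CommRing R] [LinearOrderedAddCommMonoidWithTop Γ₀] (u : AddValuation R Γ₀)

theorem AddValuation.map_multiset_prod (s : Multiset R) : u s.prod = (s.map u).sum := by
  induction s using Multiset.induction with
  | empty => simp
  | cons a s ih => simp [u.map_mul, ih]

theorem AddValuation.map_eval_eq_sum_roots [IsDomain R] {P : R[X]} (hP : P.Monic)
    (hsplit : P.Splits) (y : R) :
    u (P.eval y) = (P.roots.map fun r => u (y - r)).sum := by
  conv_lhs => rw [hsplit.eq_prod_roots_of_monic hP]
  simp [eval_multiset_prod, u.map_multiset_prod, Multiset.map_map]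

theorem IsPseudoLimit.eventually_valuation_eval_lt [IsDomain R] {u : AddValuation R Γ₀}
    {S : ℕ → R} {x : R} (hx : IsPseudoLimit u S x) {P : R[X]} (hP : P.Monic) (hsplit : P.Splits)
    (hroot : P.IsRoot x) :
    ∀ᶠ n in atTop, u (P.eval (S n)) < u (P.eval (S (n + 1))) := by
  classical
  have hroots : ∀ᶠ n in atTop, ∀ r ∈ P.roots.toFinset,
      u (S n - r) ≠ ⊤ ∧ u (S n - r) ≤ u (S (n + 1) - r) :=
    (eventually_all_finset _).2 fun r _ => hx.eventually_valuation_sub_mono r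
  filter_upwards [hroots] with n hn
  simp only [Multiset.mem_toFinset] at hn
  rw [u.map_eval_eq_sum_roots hP hsplit, u.map_eval_eq_sum_roots hP hsplit]
  refine Multiset.sum_map_lt_sum_map_of_ne_top (fun r hr => (hn r hr).2) (fun r hr => (hn r hr).1)
    ((mem_roots hP.ne_zero).2 hroot) ?_
  rw [u.map_sub_swap, u.map_sub_swap (S (n + 1))]
  exact hx n

end Polynomials

theorem stmt16_general {K L : Type*} [Field K] [Field L] [Algebra K L]
    [IsAlgClosed L] [Algebra.IsAlgebraic K L]
    (v : AddValuation K (WithTop ℝ)) (u : AddValuation L (WithTop ℝ))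
    (hu : ∀ x : K, u (algebraMap K L x) = v x)
    (s t : ℕ → K)
    (hE : ∀ n, v (s (n + 1) - s n) < v (s (n + 2) - s (n + 1)))
    (hF : ∀ n, v (t (n + 1) - t n) < v (t (n + 2) - t (n + 1)))
    (hbreadth : (⨆ n, v (s (n + 1) - s n)) = ⨆ n, v (t (n + 1) - t n))
    (hequiv : ∀ k : ℕ, ∃ i0 j0 : ℕ, ∀ i ≥ i0, ∀ j ≥ j0,
      v (t (k + 1) - t k) < v (s i - t j))
    (β : L)
    (hβ : ∀ n, u (β - algebraMap K L (s n)) < u (β - algebraMap K L (s (n + 1)))) :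
    (∀ n, u (β - algebraMap K L (t n)) < u (β - algebraMap K L (t (n + 1)))) ∧
    (∃ g : Polynomial K, ∃ N, ∀ n ≥ N, v (g.eval (t n)) < v (g.eval (t (n + 1)))) ∧
    {x : L | ∀ n, u (x - algebraMap K L (s n)) < u (x - algebraMap K L (s (n + 1)))} =
      {x : L | ∀ n, u (x - algebraMap K L (t n)) < u (x - algebraMap K L (t (n + 1)))} := by
  have hv : ∀ a b : K, v (a - b) = u (algebraMap K L a - algebraMap K L b) := fun a b => by
    rw [← hu, map_sub]
  simp only [hv] at hE hF hbreadth hequiv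
  have hS : IsPseudoConvergent u (algebraMap K L ∘ s) := hE
  have hT : IsPseudoConvergent u (algebraMap K L ∘ t) := hF
  have hlim : ∀ x,
      IsPseudoLimit u (algebraMap K L ∘ s) x ↔ IsPseudoLimit u (algebraMap K L ∘ t) x :=
    fun x => isPseudoLimit_iff_of_equivalent hS hT
      (hT.strictMono.exists_lt_of_ciSup_eq (OrderTop.bddAbove _) hbreadth.symm)
      (hS.strictMono.exists_lt_of_ciSup_eq (OrderTop.bddAbove _) hbreadth)
      fun k => by
        obtain ⟨i0, j0, h⟩ := hequiv k
        exact eventually_atTop.2 ⟨i0, fun i hi => eventually_atTop.2 ⟨j0, h i hi⟩⟩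
  have hβT : IsPseudoLimit u (algebraMap K L ∘ t) β := (hlim β).1 hβ
  have hint : IsIntegral K β := (Algebra.IsAlgebraic.isAlgebraic β).isIntegral
  obtain ⟨N, hN⟩ := eventually_atTop.1 <| hβT.eventually_valuation_eval_lt
    ((minpoly.monic hint).map (algebraMap K L)) (IsAlgClosed.splits _)
    (by simp [IsRoot, eval_map_algebraMap])
  refine ⟨hβT, ⟨minpoly K β, N, fun n hn => ?_⟩, Set.ext hlim⟩
  simpa only [← hu, Function.comp_apply, eval_map_apply] using hN n hn

/-- If E = {s_n} and F = {t_n} are equivalent pseudo-convergent sequences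
(same breadth and v(s_i - t_j) > v(t_{k+1} - t_k) for all large i, j), E of
algebraic type, and β in the algebraic closure is a pseudo-limit of E with
respect to an extension u of v, then β is also a pseudo-limit of F; in
particular F is of algebraic type and L_E^u = L_F^u. -/
theorem stmt16 {K L : Type*} [Field K] [Field L] [Algebra K L]
    [IsAlgClosed L] [Algebra.IsAlgebraic K L]
    (v : AddValuation K (WithTop ℝ)) (u : AddValuation L (WithTop ℝ))
    (hu : ∀ x : K, u (algebraMap K L x) = v x)
    (s t : ℕ → K)
    (hE : ∀ n, v (s (n + 1) - s n) < v (s (n + 2) - s (n + 1)))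
    (hF : ∀ n, v (t (n + 1) - t n) < v (t (n + 2) - t (n + 1)))
    (hbreadth : (⨆ n, v (s (n + 1) - s n)) = ⨆ n, v (t (n + 1) - t n))
    (hequiv : ∀ k : ℕ, ∃ i0 j0 : ℕ, ∀ i ≥ i0, ∀ j ≥ j0,
      v (t (k + 1) - t k) < v (s i - t j))
    (hEalg : ∃ f : Polynomial K, ∃ N, ∀ n ≥ N, v (f.eval (s n)) < v (f.eval (s (n + 1))))
    (β : L)
    (hβ : ∀ n, u (β - algebraMap K L (s n)) < u (β - algebraMap K L (s (n + 1)))) :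
    (∀ n, u (β - algebraMap K L (t n)) < u (β - algebraMap K L (t (n + 1)))) ∧
    (∃ g : Polynomial K, ∃ N, ∀ n ≥ N, v (g.eval (t n)) < v (g.eval (t (n + 1)))) ∧
    {x : L | ∀ n, u (x - algebraMap K L (s n)) < u (x - algebraMap K L (s (n + 1)))} =
      {x : L | ∀ n, u (x - algebraMap K L (t n)) < u (x - algebraMap K L (t (n + 1)))} :=
  stmt16_general v u hu s t hE hF hbreadth hequiv β hβ
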